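/- Let R be a commutative noetherian ℚ-algebra, G a finite group acting on R by ring automorphisms, and I a G-stable ideal. Then the G-invariants of the I-adic completion of R are canonically isomorphic to the (I^G)-adic completion of R^G: (R̂_I)^G ≅ (R^G)^∧_{I^G}. -/

import Mathlib

/-!
The Reynolds operator `x ↦ |G|⁻¹ ∑ g • x` is an `R^G`-linear retraction `R → R^G`. Hence ideals
of `R^G` are contracted from their extensions to `R`, and a compatible family in `∏ R ⧸ Iⁿ` whose
components are `G`-invariant has components lifting to `R^G`.

Every `x ∈ I` is a root of `∏ g, (X - g • x)`, a polynomial with coefficients in `R^G` that is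
`X ^ |G|` modulo `I`. So `I` lies in the radical of `I^G R`, and as `R` is noetherian,
`I ^ (m n) ∩ R^G ⊆ (I^G R)ⁿ ∩ R^G = (I^G)ⁿ` for some `m`. Thus the `I`-adic and `I^G`-adic
topologies agree on `R^G`, and the natural map `(R^G)^∧ → (R̂_I)^G` is bijective.
-/

open Polynomial

namespace Ideal

theorem comap_map_le_of_retraction {A B : Type*} [CommRing A] [CommRing B] [Algebra A B]
    (ρ : B →ₗ[A] A) (hρ : ∀ a, ρ (algebraMap A B a) = a) (J : Ideal A) :
    (J.map (algebraMap A B)).comap (algebraMap A B) ≤ J := by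
  -- `{b | ∀ r, ρ (r * b) ∈ J}` is an ideal of `B` containing the image of `J`.
  have key : ∀ b ∈ J.map (algebraMap A B), ∀ r : B, ρ (r * b) ∈ J := by
    intro b hb
    induction hb using Submodule.span_induction with
    | mem _ h =>
      obtain ⟨j, hj, rfl⟩ := h
      intro r
      rw [mul_comm, ← Algebra.smul_def, map_smul, smul_eq_mul]
      exact J.mul_mem_right _ hj
    | zero => simp
    | add _ _ _ _ h₁ h₂ =>
      intro r
      rw [mul_add, map_add]
      exact J.add_mem (h₁ r) (h₂ r)
    | smul s _ _ h =>
      intro r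
      rw [smul_eq_mul, ← mul_assoc]
      exact h _
  intro a ha
  simpa [hρ] using key _ ha 1

theorem pow_mem_of_eval_eq_zero {R : Type*} [CommRing R] {J : Ideal R} {p : R[X]} {x : R}
    {k : ℕ} (hx : p.eval x = 0) (hp : ∀ i, (p - X ^ k).coeff i ∈ J) : x ^ k ∈ J := by
  have h : (p - X ^ k).eval x ∈ J := by
    rw [eval_eq_sum]
    exact J.sum_mem fun i _ => J.mul_mem_right _ (hp i)
  simpa [hx] using J.neg_mem h

def IsAdicCompatible {R : Type*} [CommRing R] (I : Ideal R) (f : ∀ n : ℕ, R ⧸ I ^ n) : Prop :=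
  ∀ m n : ℕ, ∀ h : m ≤ n,
    Ideal.Quotient.factor (S := I ^ n) (T := I ^ m) (Ideal.pow_le_pow_right h) (f n) = f m

end Ideal

section AdicComparison

variable {A B : Type*} [CommRing A] [CommRing B] (φ : A →+* B) {K : Ideal A} {I : Ideal B}

theorem Ideal.pow_le_comap_pow_of_le_comap (hKI : K ≤ I.comap φ) (n : ℕ) :
    K ^ n ≤ (I ^ n).comap φ :=
  (Ideal.pow_right_mono hKI n).trans (Ideal.le_comap_pow φ n)

def powQuotientMap (hKI : K ≤ I.comap φ) : (∀ n, A ⧸ K ^ n) →+* ∀ n, B ⧸ I ^ n :=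
  RingHom.pi fun n =>
    (Ideal.quotientMap (I ^ n) φ (Ideal.pow_le_comap_pow_of_le_comap φ hKI n)).comp
      (Pi.evalRingHom _ n)

variable {φ} (hKI : K ≤ I.comap φ)

theorem powQuotientMap_apply_of_mk_eq (d : ∀ n, A ⧸ K ^ n) (n : ℕ) (a : A)
    (ha : Ideal.Quotient.mk _ a = d n) :
    powQuotientMap φ hKI d n = Ideal.Quotient.mk (I ^ n) (φ a) := by
  simp [powQuotientMap, ← ha, Ideal.quotientMap_mk]

theorem exists_mk_eq_powQuotientMap (d : ∀ n, A ⧸ K ^ n) (n : ℕ) :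
    ∃ a, Ideal.Quotient.mk (I ^ n) (φ a) = powQuotientMap φ hKI d n := by
  obtain ⟨a, ha⟩ := Ideal.Quotient.mk_surjective (d n)
  exact ⟨a, (powQuotientMap_apply_of_mk_eq hKI d n a ha).symm⟩

theorem Ideal.IsAdicCompatible.powQuotientMap {d : ∀ n, A ⧸ K ^ n}
    (hd : K.IsAdicCompatible d) : I.IsAdicCompatible (powQuotientMap φ hKI d) := by
  intro m n h
  obtain ⟨a, ha⟩ := Ideal.Quotient.mk_surjective (d n)
  have ha' : Ideal.Quotient.mk _ a = d m := by
    rw [← hd m n h, ← ha, Ideal.Quotient.factor_mk]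
  rw [powQuotientMap_apply_of_mk_eq hKI d n a ha, powQuotientMap_apply_of_mk_eq hKI d m a ha',
    Ideal.Quotient.factor_mk]

theorem eq_zero_of_powQuotientMap_eq_zero {m : ℕ} (hm : 0 < m)
    (hIK : ∀ n, (I ^ (m * n)).comap φ ≤ K ^ n) {d : ∀ n, A ⧸ K ^ n}
    (hd : K.IsAdicCompatible d) (h0 : powQuotientMap φ hKI d = 0) : d = 0 := by
  funext n
  obtain ⟨a, ha⟩ := Ideal.Quotient.mk_surjective (d (m * n))
  have haI : φ a ∈ I ^ (m * n) := by
    rw [← Ideal.Quotient.eq_zero_iff_mem, ← powQuotientMap_apply_of_mk_eq hKI d _ a ha, h0]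
    rfl
  rw [← hd n (m * n) (Nat.le_mul_of_pos_left n hm), ← ha, Ideal.Quotient.factor_mk]
  exact Ideal.Quotient.eq_zero_iff_mem.2 (hIK n haI)

theorem exists_powQuotientMap_eq {m : ℕ} (hm : 0 < m)
    (hIK : ∀ n, (I ^ (m * n)).comap φ ≤ K ^ n) {f : ∀ n, B ⧸ I ^ n}
    (hf : I.IsAdicCompatible f) (hrange : ∀ n, ∃ a, Ideal.Quotient.mk (I ^ n) (φ a) = f n) :
    ∃ d, K.IsAdicCompatible d ∧ powQuotientMap φ hKI d = f := by
  choose a ha using hrange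
  have hlift : ∀ k l, k ≤ l → Ideal.Quotient.mk (I ^ k) (φ (a l)) = f k := fun k l hkl => by
    rw [← hf k l hkl, ← ha l, Ideal.Quotient.factor_mk]
  refine ⟨fun n => Ideal.Quotient.mk (K ^ n) (a (m * n)), fun n n' h => ?_, funext fun n => ?_⟩
  · rw [Ideal.Quotient.factor_mk, Ideal.Quotient.eq]
    refine hIK n ?_
    rw [Ideal.mem_comap, map_sub, ← Ideal.Quotient.eq, hlift _ _ (Nat.mul_le_mul_left m h), ha]
  · rw [powQuotientMap_apply_of_mk_eq hKI _ n _ rfl, hlift n _ (Nat.le_mul_of_pos_left n hm)]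

end AdicComparison

section Reynolds

variable {R : Type*} [CommRing R] [Algebra ℚ R] (G : Type*) [Fintype G]

theorem inv_card_smul_sum_const [Nonempty G] (x : R) :
    (Fintype.card G : ℚ)⁻¹ • ∑ _g : G, x = x := by
  rw [Finset.sum_const, Finset.card_univ, ← Nat.cast_smul_eq_nsmul ℚ, smul_smul,
    inv_mul_cancel₀ (by exact_mod_cast Fintype.card_ne_zero), one_smul]

variable [Group G] [MulSemiringAction G R]

noncomputable def reynolds : R →ₗ[ℚ] R :=
  (Fintype.card G : ℚ)⁻¹ • ∑ g : G, DistribSMul.toLinearMap ℚ R g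

theorem reynolds_apply (x : R) :
    reynolds G x = (Fintype.card G : ℚ)⁻¹ • ∑ g : G, g • x := by
  simp [reynolds]

variable {G}

theorem smul_reynolds (g : G) (x : R) : g • reynolds G x = reynolds G x := by
  rw [reynolds_apply, smul_comm, Finset.smul_sum]
  congr 1
  exact Fintype.sum_equiv (Equiv.mulLeft g) _ _ fun h => (mul_smul g h x).symm

theorem reynolds_eq_self {x : R} (hx : x ∈ FixedPoints.subring R G) : reynolds G x = x := by
  rw [reynolds_apply, Finset.sum_congr rfl fun g _ => hx g, inv_card_smul_sum_const]

theorem reynolds_mul_of_mem {s : R} (hs : s ∈ FixedPoints.subring R G) (x : R) :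
    reynolds G (s * x) = s * reynolds G x := by
  simp_rw [reynolds_apply, smul_mul', hs _, ← Finset.mul_sum, mul_smul_comm]

theorem reynolds_sub_self_mem {J : Ideal R} {x : R} (hx : ∀ g : G, g • x - x ∈ J) :
    reynolds G x - x ∈ J := by
  have h : reynolds G x - x = (Fintype.card G : ℚ)⁻¹ • ∑ g : G, (g • x - x) := by
    rw [Finset.sum_sub_distrib, smul_sub, inv_card_smul_sum_const, reynolds_apply]
  rw [h]
  exact J.smul_of_tower_mem _ (J.sum_mem fun g _ => hx g)

variable (G) in
noncomputable def reynoldsRetraction :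
    R →ₗ[FixedPoints.subring R G] FixedPoints.subring R G where
  toFun x := ⟨reynolds G x, fun g => smul_reynolds g x⟩
  map_add' x y := Subtype.ext (map_add _ x y)
  map_smul' s x := Subtype.ext (reynolds_mul_of_mem s.2 x)

theorem comap_map_subtype_fixedPoints_le (J : Ideal (FixedPoints.subring R G)) :
    (J.map (FixedPoints.subring R G).subtype).comap (FixedPoints.subring R G).subtype ≤ J :=
  Ideal.comap_map_le_of_retraction (reynoldsRetraction G)
    (fun s => Subtype.ext (reynolds_eq_self s.2)) J

end Reynolds

section Invariants

variable {R : Type*} [CommRing R] {G : Type*} [Group G] [MulSemiringAction G R]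

theorem Ideal.smul_mem_pow_of_smul_mem {J : Ideal R} (hJ : ∀ g : G, ∀ x ∈ J, g • x ∈ J)
    (n : ℕ) : ∀ g : G, ∀ x ∈ J ^ n, g • x ∈ J ^ n := fun g _ hx =>
  Ideal.le_comap_pow (MulSemiringAction.toRingHom G R g) n
    (Ideal.pow_right_mono (fun y hy => hJ g y hy) n hx)

theorem forall_mk_smul_eq_iff_exists_fixedPoints [Algebra ℚ R] [Fintype G] {J : Ideal R}
    (hJ : ∀ g : G, ∀ x ∈ J, g • x ∈ J) (y : R ⧸ J) :
    (∀ (g : G) (x : R), Ideal.Quotient.mk J x = y → Ideal.Quotient.mk J (g • x) = y) ↔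
      ∃ s : FixedPoints.subring R G, Ideal.Quotient.mk J s = y := by
  constructor
  · intro h
    obtain ⟨x, rfl⟩ := Ideal.Quotient.mk_surjective y
    refine ⟨⟨reynolds G x, fun g => smul_reynolds g x⟩, Ideal.Quotient.eq.2 ?_⟩
    exact reynolds_sub_self_mem fun g => Ideal.Quotient.eq.1 (h g x rfl)
  · rintro ⟨s, rfl⟩ g x hx
    have h := hJ g _ (Ideal.Quotient.eq.1 hx)
    rw [smul_sub, s.2 g] at h
    exact Ideal.Quotient.eq.2 h

theorem pow_card_mem_map_comap_subtype [Fintype G] {I : Ideal R}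
    (hI : ∀ g : G, ∀ x ∈ I, g • x ∈ I) {x : R} (hx : x ∈ I) :
    x ^ Fintype.card G ∈
      (I.comap (FixedPoints.subring R G).subtype).map (FixedPoints.subring R G).subtype := by
  set P := MulSemiringAction.charpoly G x
  have hmod : P.map (Ideal.Quotient.mk I) = X ^ Fintype.card G := by
    simp [P, MulSemiringAction.charpoly_eq, Polynomial.map_prod,
      Ideal.Quotient.eq_zero_iff_mem.2 (hI _ x hx)]
  refine Ideal.pow_mem_of_eval_eq_zero (MulSemiringAction.eval_charpoly G x) fun i => ?_
  have hfix : (P - X ^ Fintype.card G).coeff i ∈ FixedPoints.subring R G := by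
    intro g
    rw [coeff_sub, smul_sub, MulSemiringAction.smul_coeff_charpoly, coeff_X_pow]
    split_ifs <;> simp [P]
  have hmem : (P - X ^ Fintype.card G).coeff i ∈ I := by
    rw [← Ideal.Quotient.eq_zero_iff_mem, ← coeff_map, Polynomial.map_sub, hmod,
      Polynomial.map_pow, map_X, sub_self, coeff_zero]
  exact Ideal.mem_map_of_mem _
    (show (⟨_, hfix⟩ : FixedPoints.subring R G) ∈ I.comap (FixedPoints.subring R G).subtype
      from hmem)

theorem exists_comap_pow_mul_le_pow [IsNoetherianRing R] [Algebra ℚ R] [Fintype G]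
    {I : Ideal R} (hI : ∀ g : G, ∀ x ∈ I, g • x ∈ I) :
    ∃ m, 0 < m ∧ ∀ n, (I ^ (m * n)).comap (FixedPoints.subring R G).subtype ≤
      (I.comap (FixedPoints.subring R G).subtype) ^ n := by
  set K := I.comap (FixedPoints.subring R G).subtype
  obtain ⟨m, hm⟩ := Ideal.exists_pow_le_of_le_radical_of_fg
    (fun x hx => ⟨_, pow_card_mem_map_comap_subtype hI hx⟩) (IsNoetherian.noetherian I)
  refine ⟨m + 1, m.succ_pos, fun n => ?_⟩
  calc (I ^ ((m + 1) * n)).comap _ ≤ ((K ^ n).map (FixedPoints.subring R G).subtype).comap _ := by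
        refine Ideal.comap_mono ?_
        rw [pow_mul, Ideal.map_pow]
        exact Ideal.pow_right_mono ((Ideal.pow_le_pow_right m.le_succ).trans hm) n
    _ ≤ K ^ n := comap_map_subtype_fixedPoints_le _

end Invariants

/-- Let `R` be a commutative noetherian `ℚ`-algebra, `G` a finite group acting on `R`
by ring automorphisms and `I` a `G`-stable ideal.  The `I`-adic completion of `R` is
realized as the subring `C` of `∀ n, R ⧸ I ^ n` of compatible families; the `G`-action
descends to it, and we cut out the invariant compatible families (invariance being
expressed on representatives).  Similarly the `I^G`-adic completion of `S = R^G` is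
realized as the subring `D` of compatible families, where `K = I ∩ S` is the ideal
`I^G` of `S`.  Then `(R̂_I)^G` and `(R^G)^∧_{I^G}` are isomorphic as rings. -/
theorem invariants_of_adicCompletion {R : Type*} [CommRing R] [IsNoetherianRing R] [Algebra ℚ R]
    {G : Type*} [Group G] [Finite G] [MulSemiringAction G R]
    (I : Ideal R) (hI : ∀ g : G, ∀ x ∈ I, g • x ∈ I)
    (S : Subring R) (hS : ∀ x : R, x ∈ S ↔ ∀ g : G, g • x = x)
    (K : Ideal S) (hK : K = I.comap S.subtype)
    (C : Subring (∀ n : ℕ, R ⧸ I ^ n))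
    (hC : (C : Set (∀ n : ℕ, R ⧸ I ^ n)) =
      {f | (∀ m n : ℕ, ∀ h : m ≤ n,
              Ideal.Quotient.factor (S := I ^ n) (T := I ^ m) (Ideal.pow_le_pow_right h) (f n) = f m) ∧
           (∀ (g : G) (n : ℕ) (x : R),
              Ideal.Quotient.mk (I ^ n) x = f n → Ideal.Quotient.mk (I ^ n) (g • x) = f n)})
    (D : Subring (∀ n : ℕ, S ⧸ K ^ n))
    (hD : (D : Set (∀ n : ℕ, S ⧸ K ^ n)) =
      {f | ∀ m n : ℕ, ∀ h : m ≤ n,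
              Ideal.Quotient.factor (S := K ^ n) (T := K ^ m) (Ideal.pow_le_pow_right h) (f n) = f m}) :
    Nonempty (C ≃+* D) := by
  cases nonempty_fintype G
  obtain rfl : S = FixedPoints.subring R G := SetLike.ext hS
  subst hK
  obtain ⟨m, hm, hIK⟩ := exists_comap_pow_mul_le_pow hI
  have hD' (d) : d ∈ D ↔ Ideal.IsAdicCompatible _ d := Set.ext_iff.1 hD d
  have hC' (f) : f ∈ C ↔ I.IsAdicCompatible f ∧
      ∀ n, ∃ s : FixedPoints.subring R G, Ideal.Quotient.mk (I ^ n) (s : R) = f n :=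
    (Set.ext_iff.1 hC f).trans <| and_congr_right fun _ => forall_comm.trans <|
      forall_congr' fun n =>
        forall_mk_smul_eq_iff_exists_fixedPoints (Ideal.smul_mem_pow_of_smul_mem hI n) _
  let ψ : D →+* C := (powQuotientMap _ le_rfl).restrict D C fun d hd =>
    (hC' _).2 ⟨((hD' d).1 hd).powQuotientMap le_rfl, exists_mk_eq_powQuotientMap le_rfl d⟩
  refine ⟨(RingEquiv.ofBijective ψ ⟨(injective_iff_map_eq_zero ψ).2 fun d hd => ?_, ?_⟩).symm⟩
  · exact Subtype.ext <| eq_zero_of_powQuotientMap_eq_zero le_rfl hm hIK ((hD' d).1 d.2)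
      (congrArg Subtype.val hd)
  · rintro ⟨f, hf⟩
    obtain ⟨hf_compat, hf_lift⟩ := (hC' f).1 hf
    obtain ⟨d, hd, rfl⟩ := exists_powQuotientMap_eq le_rfl hm hIK hf_compat hf_lift
    exact ⟨⟨d, (hD' d).2 hd⟩, rfl⟩
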